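/- arXiv:2211.02755 — 2 statements merged into one kernel-verified Lean document; each statement's English description precedes it below -/
import Mathlib

section
/- Let M be a matroid with finite ground set E, let v : E → ℝ be a weight function taking nonnegative values that is injective on E, and let T ⊆ S ⊆ E. If B_S is a max-weight basis of S and B_T is a max-weight basis of T, then B_S ∩ T ⊆ B_T. -/
open scoped BigOperators

/-- `B` is a max-weight basis of `S` in the matroid `M` w.r.t. the weight function `v`:
`B` is a basis of `S` (a maximal `M`-independent subset of `S`) and every basis `B'`
of `S` has total weight at most that of `B`. -/
def IsMaxWeightBasis {α : Type*} (M : Matroid α) (v : α → ℝ) (S B : Set α) : Prop :=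
  M.IsBasis B S ∧ ∀ B' : Set α, M.IsBasis B' S → ∑ᶠ x ∈ B', v x ≤ ∑ᶠ x ∈ B, v x

/-! If `e ∈ S` lies outside a max-weight basis `B` of `S`, every other element of the fundamental
circuit of `e` in `B` is heavier than `e`, since exchanging it for `e` gives another basis of `S`.
So `e` is spanned by the elements of `B` heavier than it, and consequently, for every threshold
`w`, the elements of `S` heavier than `w` are spanned by those of `B`. If `x ∈ B_S ∩ T` were not in
`B_T`, it would be spanned by the heavier elements of `B_T`, hence by the heavier elements of
`B_S`, contradicting the independence of `B_S`. -/

open Set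

lemma finsum_mem_insert_sdiff_singleton_add {β M : Type*} [AddCommGroup M] (f : β → M)
    {s : Set β} {a b : β} (hs : s.Finite) (ha : a ∉ s) (hb : b ∈ s) :
    ∑ᶠ i ∈ insert a s \ {b}, f i + f b = ∑ᶠ i ∈ s, f i + f a := by
  have hab : a ≠ b := ne_of_mem_of_not_mem hb ha |>.symm
  have hs' : (s \ {b}).Finite := hs.sdiff
  rw [← insert_sdiff_singleton_comm hab, finsum_mem_insert f (fun h ↦ ha h.1) hs',
    ← insert_sdiff_self_of_mem hb, finsum_mem_insert f (fun h ↦ h.2 rfl) hs',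
    insert_sdiff_self_of_mem hb]
  abel

namespace IsMaxWeightBasis

variable {α : Type*} {M : Matroid α} {v : α → ℝ} {S B : Set α} {e y : α} [M.RankFinite]

lemma le_of_mem_fundCircuit (hB : IsMaxWeightBasis M v S B) (heS : e ∈ S) (heB : e ∉ B)
    (hy : y ∈ M.fundCircuit e B) : v e ≤ v y := by
  obtain rfl | hye := eq_or_ne y e
  · rfl
  have hyB : y ∈ B := (M.fundCircuit_subset_insert e B hy).resolve_left hye
  have hC : M.IsCircuit (M.fundCircuit e B) :=
    hB.1.indep.fundCircuit_isCircuit (hB.1.subset_closure heS) heB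
  have hycl : y ∈ M.closure (insert e B \ {y}) :=
    M.closure_subset_closure (sdiff_subset_sdiff_left (M.fundCircuit_subset_insert e B))
      (hC.mem_closure_sdiff_singleton_of_mem hy)
  have hexch := hB.2 _ (hB.1.isBasis_insert_sdiff_of_mem_closure hycl (.inr hyB) heS)
  have hsum := finsum_mem_insert_sdiff_singleton_add v hB.1.indep.finite heB hyB
  linarith

lemma mem_closure_setOf_lt (hB : IsMaxWeightBasis M v S B) (hv : InjOn v S) (heS : e ∈ S)
    (heB : e ∉ B) : e ∈ M.closure {y ∈ B | v e < v y} := by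
  have hC : M.IsCircuit (M.fundCircuit e B) :=
    hB.1.indep.fundCircuit_isCircuit (hB.1.subset_closure heS) heB
  refine M.closure_subset_closure ?_
    (hC.mem_closure_sdiff_singleton_of_mem (M.mem_fundCircuit e B))
  rintro y ⟨hyC, hye : y ≠ e⟩
  have hyB : y ∈ B := (M.fundCircuit_subset_insert e B hyC).resolve_left hye
  refine ⟨hyB, (hB.le_of_mem_fundCircuit heS heB hyC).lt_of_ne fun h ↦ hye ?_⟩
  exact hv (hB.1.subset hyB) heS h.symm

lemma setOf_lt_subset_closure (hB : IsMaxWeightBasis M v S B) (hv : InjOn v S) (w : ℝ) :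
    {y ∈ S | w < v y} ⊆ M.closure {z ∈ B | w < v z} := by
  rintro y ⟨hyS, hwy⟩
  by_cases hyB : y ∈ B
  · exact M.subset_closure _ ((sep_subset _ _).trans hB.1.indep.subset_ground) ⟨hyB, hwy⟩
  refine M.closure_subset_closure ?_ (hB.mem_closure_setOf_lt hv hyS hyB)
  exact fun z hz ↦ ⟨hz.1, hwy.trans hz.2⟩

end IsMaxWeightBasis

theorem maxWeightBasis_inter_subset_general {α : Type*} (M : Matroid α) (hE : M.E.Finite)
    (v : α → ℝ) (hvinj : Set.InjOn v M.E)
    (S T : Set α) (hTS : T ⊆ S) (hSE : S ⊆ M.E)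
    (B_S B_T : Set α)
    (hBS : IsMaxWeightBasis M v S B_S) (hBT : IsMaxWeightBasis M v T B_T) :
    B_S ∩ T ⊆ B_T := by
  have : M.Finite := ⟨hE⟩
  rintro x ⟨hxBS, hxT⟩
  by_contra hxBT
  have hTE : T ⊆ M.E := hTS.trans hSE
  have hx : x ∈ M.closure {y ∈ B_T | v x < v y} :=
    hBT.mem_closure_setOf_lt (hvinj.mono hTE) hxT hxBT
  have hheavy : {y ∈ B_T | v x < v y} ⊆ M.closure {z ∈ B_S | v x < v z} := fun y hy ↦
    hBS.setOf_lt_subset_closure (hvinj.mono hSE) (v x) ⟨hTS (hBT.1.subset hy.1), hy.2⟩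
  have hsub : {z ∈ B_S | v x < v z} ⊆ B_S \ {x} := fun z hz ↦
    ⟨hz.1, by rintro rfl; exact hz.2.false⟩
  exact hBS.1.indep.notMem_closure_sdiff_of_mem hxBS
    (M.closure_subset_closure hsub (M.closure_subset_closure_of_subset_closure hheavy hx))

/-- For `T ⊆ S ⊆ E` and an injective nonnegative weight function,
a max-weight basis of `S` intersected with `T` is contained in any max-weight basis of `T`. -/
theorem maxWeightBasis_inter_subset {α : Type*} (M : Matroid α) (hE : M.E.Finite)
    (v : α → ℝ) (hv0 : ∀ x ∈ M.E, 0 ≤ v x) (hvinj : Set.InjOn v M.E)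
    (S T : Set α) (hTS : T ⊆ S) (hSE : S ⊆ M.E)
    (B_S B_T : Set α)
    (hBS : IsMaxWeightBasis M v S B_S) (hBT : IsMaxWeightBasis M v T B_T) :
    B_S ∩ T ⊆ B_T :=
  maxWeightBasis_inter_subset_general M hE v hvinj S T hTS hSE B_S B_T hBS hBT
end

section
/- Let M be a matroid with finite ground set E, let v : E → ℝ be a weight function taking nonnegative values that is injective on E, let S ⊆ E, and let c ∈ ℝ. Set T = {u ∈ S : v(u) ≥ c}. If B_S is a max-weight basis of S and B_T is a max-weight basis of T, then B_S ∩ T = B_T. -/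
/-!
Weights being distinct, let `x` be the heaviest element of the symmetric difference of `B_S ∩ T` and `B_T`; it lies in
`T`. Whichever of the two bases `B` misses `x`, all elements of `B` at least as heavy as `x` lie
in the other basis too, so together with `x` they are independent. That is impossible in a
max-weight basis: otherwise the fundamental circuit of `x` in `B` has an element lighter than `x`,
and exchanging it for `x` gives a heavier basis.
-/

open scoped BigOperators

open Set

theorem finsum_mem_insert_sdiff_singleton {α M : Type*} [AddCommMonoid M] (f : α → M)
    {s : Set α} {a b : α} (hs : s.Finite) (ha : a ∉ s) (hb : b ∈ s) :
    ∑ᶠ i ∈ insert a s \ {b}, f i + f b = f a + ∑ᶠ i ∈ s, f i := by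
  have hb' : b ∉ insert a s \ {b} := fun h => h.2 rfl
  rw [add_comm, ← finsum_mem_insert f hb' ((hs.insert a).sdiff), insert_sdiff_singleton,
    insert_eq_of_mem (mem_insert_of_mem a hb), finsum_mem_insert f ha hs]

namespace Matroid

variable {α : Type*} {M : Matroid α} {B I S : Set α} {x : α}

theorem IsBasis.exists_exchange_of_insert_indep (hB : M.IsBasis B S) (hxS : x ∈ S)
    (hxB : x ∉ B) (hI : M.Indep (insert x I)) :
    ∃ y ∈ B \ I, M.IsBasis (insert x B \ {y}) S := by
  have hxcl : x ∈ M.closure B := hB.subset_closure hxS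
  have hC := hB.indep.fundCircuit_isCircuit hxcl hxB
  obtain ⟨y, hyC, hyI⟩ := not_subset.1 fun h => hC.not_indep (hI.subset h)
  have hyB : y ∈ B :=
    (M.fundCircuit_subset_insert x B hyC).resolve_left fun h => hyI (h ▸ mem_insert x I)
  have hindep : M.Indep (insert x B \ {y}) := (hB.indep.mem_fundCircuit_iff hxcl hxB).1 hyC
  have hbase : (M ↾ S).IsBase (insert x B \ {y}) := by
    refine hB.isBase_restrict.exchange_isBase_of_indep' hyB hxB ?_
    rw [restrict_indep_iff]
    exact ⟨hindep, sdiff_subset.trans (insert_subset hxS hB.subset)⟩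
  exact ⟨y, ⟨hyB, fun h => hyI (mem_insert_of_mem x h)⟩,
    (isBase_restrict_iff hB.subset_ground).1 hbase⟩

end Matroid

section

variable {α : Type*} {M : Matroid α} {v : α → ℝ} {B I S : Set α} {x : α}

theorem IsMaxWeightBasis.exists_heavier_notMem_of_indep (hB : IsMaxWeightBasis M v S B)
    (hBfin : B.Finite) (hxS : x ∈ S) (hxB : x ∉ B) (hI : M.Indep I) (hxI : x ∈ I) :
    ∃ y ∈ B, v x ≤ v y ∧ y ∉ I := by
  by_contra! hheavy
  have hHI : insert x {y ∈ B | v x ≤ v y} ⊆ I := insert_subset hxI fun y hy => hheavy y hy.1 hy.2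
  obtain ⟨y, ⟨hyB, hyH⟩, hswap⟩ :=
    hB.1.exists_exchange_of_insert_indep hxS hxB (hI.subset hHI)
  have hlighter : v y < v x := lt_of_not_ge fun h => hyH ⟨hyB, h⟩
  have hle := hB.2 _ hswap
  have hsum := finsum_mem_insert_sdiff_singleton v hBfin hxB hyB
  linarith

end

theorem maxWeightBasis_inter_top_eq_general {α : Type*} (M : Matroid α) (hE : M.E.Finite)
    (v : α → ℝ) (hvinj : Set.InjOn v M.E)
    (S : Set α) (c : ℝ)
    (B_S B_T : Set α)
    (hBS : IsMaxWeightBasis M v S B_S)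
    (hBT : IsMaxWeightBasis M v {u ∈ S | c ≤ v u} B_T) :
    B_S ∩ {u ∈ S | c ≤ v u} = B_T := by
  set T := {u ∈ S | c ≤ v u}
  set D := symmDiff (B_S ∩ T) B_T
  by_contra hne
  have hDE : D ⊆ M.E := symmDiff_subset_union.trans
    (union_subset (inter_subset_left.trans hBS.1.indep.subset_ground) hBT.1.indep.subset_ground)
  obtain ⟨x, hxD, hx_max⟩ := exists_max_image D v (hE.subset hDE) (symmDiff_nonempty.2 hne)
  have hx_top : ∀ y ∈ D, v x ≤ v y → y = x := fun y hyD hxy =>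
    hvinj (hDE hyD) (hDE hxD) (le_antisymm (hx_max y hyD) hxy)
  rcases mem_symmDiff.1 hxD with ⟨⟨hxBS, hxT⟩, hxBT⟩ | ⟨hxBT, hxBST⟩
  · obtain ⟨y, hyBT, hxy, hyBS⟩ := hBT.exists_heavier_notMem_of_indep
      (hE.subset hBT.1.indep.subset_ground) hxT hxBT hBS.1.indep hxBS
    exact hxBT (hx_top y (Or.inr ⟨hyBT, fun h => hyBS h.1⟩) hxy ▸ hyBT)
  · have hxT : x ∈ T := hBT.1.subset hxBT
    have hxBS : x ∉ B_S := fun h => hxBST ⟨h, hxT⟩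
    obtain ⟨y, hyBS, hxy, hyBT⟩ := hBS.exists_heavier_notMem_of_indep
      (hE.subset hBS.1.indep.subset_ground) hxT.1 hxBS hBT.1.indep hxBT
    have hyT : y ∈ T := ⟨hBS.1.subset hyBS, hxT.2.trans hxy⟩
    exact hxBS (hx_top y (Or.inl ⟨⟨hyBS, hyT⟩, hyBT⟩) hxy ▸ hyBS)

/-- If `T = {u ∈ S : v u ≥ c}` consists of the top-weight elements of `S`,
then a max-weight basis of `S` intersected with `T` equals any max-weight basis of `T`. -/
theorem maxWeightBasis_inter_top_eq {α : Type*} (M : Matroid α) (hE : M.E.Finite)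
    (v : α → ℝ) (hv0 : ∀ x ∈ M.E, 0 ≤ v x) (hvinj : Set.InjOn v M.E)
    (S : Set α) (hSE : S ⊆ M.E) (c : ℝ)
    (B_S B_T : Set α)
    (hBS : IsMaxWeightBasis M v S B_S)
    (hBT : IsMaxWeightBasis M v {u ∈ S | c ≤ v u} B_T) :
    B_S ∩ {u ∈ S | c ≤ v u} = B_T :=
  maxWeightBasis_inter_top_eq_general M hE v hvinj S c B_S B_T hBS hBT
end
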